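/- Let $m \geq 2$, let $n_1,\ldots,n_m$ be positive integers with $n_{m+1}=n_1$, and let $r \geq 0$. Define $S(n_1,\ldots,n_m; r, j, q)$ as in the paper. Then $S(n_1,\ldots,n_m; r, 0, q) = S(n_1,\ldots,n_m; r, m, q^{-1}) \cdot q^{n_1 n_2 + n_2 n_3 + \cdots + n_{m-1} n_m - n_1 - 2r}$ as rational functions in $q$. -/

import Mathlib

/-!
Both `[N]` and `[a choose b]_q` are palindromic, so `q ↦ q⁻¹` multiplies them by `q^(1-N)` and
`q^(-b(a-b))`. In the `k`-th summand the binomials then contribute `q^(m k² - ∑ n_i n_{i+1})`, since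
the terms linear in `k` telescope around the cycle `n_{m+1} = n_1`; this `q^(m k²)` is cancelled by
the weight `q^(-m k²)` coming from `j = m`, and the remaining `k`-dependence cancels too, so every
summand, hence `S`, is rescaled by one and the same power of `q`.
-/

open Polynomial Finset

/-- The `q`-integer `[n] = 1 + q + ⋯ + q^(n-1)` as a polynomial in `ℤ[q]`. -/
noncomputable def qint (n : ℕ) : Polynomial ℤ := ∑ i ∈ Finset.range n, Polynomial.X ^ i

/-- The Gaussian binomial coefficient `[n choose k]_q` in `ℤ[q]`, via the `q`-Pascal rule. -/
noncomputable def qbinom : ℕ → ℕ → Polynomial ℤ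
  | _, 0 => 1
  | 0, _ + 1 => 0
  | n + 1, k + 1 => qbinom n k + Polynomial.X ^ (k + 1) * qbinom n (k + 1)

/-- `S(n₁,…,n_m; r, j, q)` of the paper, evaluated at `q ∈ ℚ(q)`.  The sequence
`n₁, …, n_m, n_{m+1}` is encoded as `n : ℕ → ℕ` (with the cyclic condition
`n (m+1) = n 1` imposed as a hypothesis in the theorems). -/
noncomputable def Sfun (q : RatFunc ℚ) (m : ℕ) (n : ℕ → ℕ) (r j : ℕ) : RatFunc ℚ :=
  (Polynomial.aeval q (qint (n 1)))⁻¹ * (Polynomial.aeval q (qbinom (n 1 + n m) (n 1)))⁻¹ *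
    ∑ k ∈ Finset.Icc 1 (n 1),
      Polynomial.aeval q (qint (2 * k)) * (Polynomial.aeval q (qint k)) ^ (2 * r) *
        q ^ ((j : ℤ) * (k : ℤ) ^ 2 - ((r : ℤ) + 1) * (k : ℤ)) *
        ∏ i ∈ Finset.Icc 1 m, Polynomial.aeval q (qbinom (n i + n (i + 1)) (n i + k))

lemma qbinom_zero_right (n : ℕ) : qbinom n 0 = 1 := by cases n <;> rfl

lemma qbinom_succ_succ (n k : ℕ) :
    qbinom (n + 1) (k + 1) = qbinom n k + X ^ (k + 1) * qbinom n (k + 1) := rfl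

lemma qbinom_eq_zero_of_lt : ∀ {n k : ℕ}, n < k → qbinom n k = 0
  | 0, _ + 1, _ => rfl
  | n + 1, k + 1, h => by
    rw [qbinom_succ_succ, qbinom_eq_zero_of_lt (by omega : n < k),
      qbinom_eq_zero_of_lt (by omega : n < k + 1)]
    ring

lemma qint_succ (n : ℕ) : qint (n + 1) = qint n + X ^ n := sum_range_succ _ _

lemma qint_succ' (n : ℕ) : qint (n + 1) = 1 + X * qint n := by
  rw [qint, qint, sum_range_succ', mul_sum]
  simp [pow_succ, mul_comm, add_comm]

lemma qbinom_one (n : ℕ) : qbinom n 1 = qint n := by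
  induction n with
  | zero => simp [qint, qbinom_eq_zero_of_lt zero_lt_one]
  | succ n ih => rw [qbinom_succ_succ, qbinom_zero_right, ih, qint_succ']; simp

lemma qbinom_succ_succ' : ∀ {n k : ℕ}, k ≤ n →
    qbinom (n + 1) (k + 1) = X ^ (n - k) * qbinom n k + qbinom n (k + 1)
  | n, 0, _ => by
    rw [qbinom_succ_succ, qbinom_zero_right, qbinom_one]
    simp only [zero_add, pow_one, Nat.sub_zero, mul_one]
    rw [← qint_succ', qint_succ]
    ring
  | n + 1, k + 1, h => by
    rcases Nat.lt_or_ge k n with hk | hk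
    · obtain ⟨d, rfl⟩ : ∃ d, n = k + 1 + d := ⟨n - (k + 1), by omega⟩
      conv_lhs => rw [qbinom_succ_succ, qbinom_succ_succ' (by omega : k ≤ k + 1 + d),
        qbinom_succ_succ' (by omega : k + 1 ≤ k + 1 + d)]
      conv_rhs => rw [qbinom_succ_succ (k + 1 + d) k, qbinom_succ_succ (k + 1 + d) (k + 1)]
      rw [show k + 1 + d - k = d + 1 by omega, show k + 1 + d + 1 - (k + 1) = d + 1 by omega,
        show k + 1 + d - (k + 1) = d by omega]
      ring
    · obtain rfl : k = n := by omega
      simp [qbinom_succ_succ, qbinom_eq_zero_of_lt (Nat.lt_succ_self k),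
        qbinom_eq_zero_of_lt (by omega : k < k + 1 + 1)]

section Palindromic

variable {K : Type*} [Field K] [Algebra ℤ K] {q : K}

lemma aeval_inv_qint (hq : q ≠ 0) (N : ℕ) :
    aeval q⁻¹ (qint N) = q ^ (1 - (N : ℤ)) * aeval q (qint N) := by
  rw [qint, map_sum, map_sum, mul_sum, ← sum_range_reflect]
  refine sum_congr rfl fun i hi => ?_
  have hiN : i < N := mem_range.mp hi
  rw [map_pow, map_pow, aeval_X, aeval_X, inv_pow, ← zpow_natCast q (N - 1 - i), ← zpow_neg,
    ← zpow_natCast q i, ← zpow_add₀ hq]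
  congr 1
  omega

lemma aeval_inv_qbinom (hq : q ≠ 0) : ∀ n k : ℕ,
    aeval q⁻¹ (qbinom n k) = q ^ (-((k : ℤ) * (n - k))) * aeval q (qbinom n k)
  | n, 0 => by simp [qbinom_zero_right]
  | 0, k + 1 => by simp [qbinom_eq_zero_of_lt (Nat.succ_pos k)]
  | n + 1, k + 1 => by
    rcases Nat.lt_or_ge n k with h | h
    · simp [qbinom_eq_zero_of_lt (by omega : n + 1 < k + 1)]
    · obtain ⟨a, rfl⟩ : ∃ a, n = k + a := ⟨n - k, by omega⟩
      conv_lhs => rw [qbinom_succ_succ]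
      conv_rhs => rw [qbinom_succ_succ' h, Nat.add_sub_cancel_left]
      simp only [map_add, map_mul, map_pow, aeval_X, inv_pow, aeval_inv_qbinom hq (k + a)]
      rw [← zpow_natCast q (k + 1), ← zpow_natCast q a, ← zpow_neg, mul_add, ← mul_assoc,
        ← mul_assoc, ← zpow_add₀ hq, ← zpow_add₀ hq]
      congr 1 <;> congr 2 <;> push_cast <;> ring

end Palindromic

lemma prod_zpow_eq_zpow_sum₀ {K ι : Type*} [CommGroupWithZero K] {q : K} (hq : q ≠ 0)
    (s : Finset ι) (f : ι → ℤ) : ∏ i ∈ s, q ^ f i = q ^ ∑ i ∈ s, f i := by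
  classical
  induction s using Finset.induction_on with
  | empty => simp
  | insert a s ha ih => rw [prod_insert ha, sum_insert ha, ih, zpow_add₀ hq]

lemma sum_Icc_sub_succ (f : ℕ → ℤ) (M : ℕ) :
    ∑ i ∈ Icc 1 M, (f i - f (i + 1)) = f 1 - f (M + 1) := by
  induction M with
  | zero => simp
  | succ M ih => rw [sum_Icc_succ_top (by omega), ih]; ring

lemma sum_cyclic_add_mul_sub {m : ℕ} {n : ℕ → ℕ} (hcyc : n (m + 1) = n 1) (k : ℤ) :
    ∑ i ∈ Icc 1 m, ((n i : ℤ) + k) * ((n (i + 1) : ℤ) - k)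
      = ∑ i ∈ Icc 1 m, (n i : ℤ) * n (i + 1) - m * k ^ 2 := by
  have hexpand : ∀ i, ((n i : ℤ) + k) * ((n (i + 1) : ℤ) - k)
      = (n i : ℤ) * n (i + 1) - k * ((n i : ℤ) - n (i + 1)) - k ^ 2 := fun i => by ring
  simp only [hexpand, sum_sub_distrib, ← mul_sum, sum_Icc_sub_succ (fun i => (n i : ℤ)), hcyc,
    sum_const, Nat.card_Icc, nsmul_eq_mul]
  push_cast
  ring

noncomputable def Ssummand (q : RatFunc ℚ) (m : ℕ) (n : ℕ → ℕ) (r j k : ℕ) : RatFunc ℚ :=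
  aeval q (qint (2 * k)) * aeval q (qint k) ^ (2 * r) *
    q ^ ((j : ℤ) * (k : ℤ) ^ 2 - ((r : ℤ) + 1) * (k : ℤ)) *
    ∏ i ∈ Icc 1 m, aeval q (qbinom (n i + n (i + 1)) (n i + k))

lemma Sfun_eq_sum_Ssummand (q : RatFunc ℚ) (m : ℕ) (n : ℕ → ℕ) (r j : ℕ) :
    Sfun q m n r j = (aeval q (qint (n 1)))⁻¹ * (aeval q (qbinom (n 1 + n m) (n 1)))⁻¹ *
      ∑ k ∈ Icc 1 (n 1), Ssummand q m n r j k := rfl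

section Inversion

variable {q : RatFunc ℚ} {m : ℕ} {n : ℕ → ℕ}

lemma Ssummand_inv (hq : q ≠ 0) (hcyc : n (m + 1) = n 1) (r k : ℕ) :
    Ssummand q⁻¹ m n r m k
      = q ^ (1 + 2 * (r : ℤ) - ∑ i ∈ Icc 1 m, (n i : ℤ) * n (i + 1)) * Ssummand q m n r 0 k := by
  unfold Ssummand
  simp only [aeval_inv_qint hq, aeval_inv_qbinom hq, prod_mul_distrib, prod_zpow_eq_zpow_sum₀ hq,
    inv_zpow', ← zpow_natCast, mul_zpow, ← zpow_mul]
  have collect_powers : ∀ (a b c d e f : ℤ) (A B C : RatFunc ℚ), a + b + c + d = e + f →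
      q ^ a * A * (q ^ b * B) * q ^ c * (q ^ d * C) = q ^ e * (A * B * q ^ f * C) := by
    intro a b c d e f A B C h
    rw [show e = a + b + c + d - f by omega, zpow_sub₀ hq, zpow_add₀ hq, zpow_add₀ hq,
      zpow_add₀ hq]
    field_simp
  refine collect_powers _ _ _ _ _ _ _ _ _ ?_
  push_cast
  simp only [add_sub_add_left_eq_sub, sum_neg_distrib, sum_cyclic_add_mul_sub hcyc]
  ring

lemma Sfun_inv (hq : q ≠ 0) (hcyc : n (m + 1) = n 1) (r : ℕ) :
    Sfun q⁻¹ m n r m = q ^ ((n 1 : ℤ) + n 1 * n m + 2 * r - ∑ i ∈ Icc 1 m, (n i : ℤ) * n (i + 1))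
      * Sfun q m n r 0 := by
  simp only [Sfun_eq_sum_Ssummand, aeval_inv_qint hq, aeval_inv_qbinom hq, Ssummand_inv hq hcyc,
    ← mul_sum, mul_inv, ← zpow_neg]
  have collect_powers : ∀ (a b c d : ℤ) (A B C : RatFunc ℚ), a + b + c = d →
      q ^ a * A * (q ^ b * B) * (q ^ c * C) = q ^ d * (A * B * C) := by
    intro a b c d A B C h
    rw [← h, zpow_add₀ hq, zpow_add₀ hq]
    ring
  refine collect_powers _ _ _ _ _ _ _ ?_
  push_cast
  ring

end Inversion

theorem stmt_16_general (m : ℕ) (hm : 2 ≤ m) (n : ℕ → ℕ)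
    (hcyc : n (m + 1) = n 1) (r : ℕ) :
    Sfun (RatFunc.X : RatFunc ℚ) m n r 0
      = Sfun ((RatFunc.X : RatFunc ℚ)⁻¹) m n r m *
          (RatFunc.X : RatFunc ℚ) ^
            ((∑ i ∈ Finset.Icc 1 (m - 1), (n i : ℤ) * (n (i + 1) : ℤ))
              - (n 1 : ℤ) - 2 * (r : ℤ)) := by
  have hq : (RatFunc.X : RatFunc ℚ) ≠ 0 := RatFunc.X_ne_zero
  have hsplit : ∑ i ∈ Icc 1 m, (n i : ℤ) * n (i + 1)
      = ∑ i ∈ Icc 1 (m - 1), (n i : ℤ) * n (i + 1) + n m * n 1 := by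
    obtain ⟨m', rfl⟩ : ∃ m', m = m' + 1 := ⟨m - 1, by omega⟩
    rw [sum_Icc_succ_top (by omega), hcyc, Nat.add_sub_cancel]
  rw [Sfun_inv hq hcyc, hsplit, mul_comm, ← mul_assoc, ← zpow_add₀ hq]
  convert (one_mul _).symm using 2
  rw [← zpow_zero RatFunc.X]
  congr 1
  ring

theorem stmt_16 (m : ℕ) (hm : 2 ≤ m) (n : ℕ → ℕ)
    (hpos : ∀ i ∈ Finset.Icc 1 m, 0 < n i) (hcyc : n (m + 1) = n 1) (r : ℕ) :
    Sfun (RatFunc.X : RatFunc ℚ) m n r 0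
      = Sfun ((RatFunc.X : RatFunc ℚ)⁻¹) m n r m *
          (RatFunc.X : RatFunc ℚ) ^
            ((∑ i ∈ Finset.Icc 1 (m - 1), (n i : ℤ) * (n (i + 1) : ℤ))
              - (n 1 : ℤ) - 2 * (r : ℤ)) :=
  stmt_16_general m hm n hcyc r
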